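/- (Intertwining of the PEPS map with the Dango operations.) For every ξ ∈ ℝ: P · T_Z(ξ) = U(ξ) · P and P · T_X(ξ) = (Vᴴ · U(ξ) · V) · P, as identities of 3×4 complex matrices (matrices from Fin 2 × Fin 2 to Fin 3). -/

import Mathlib

open Matrix Complex
open scoped ComplexConjugate

noncomputable section

/-- Pauli matrix `X` -/
def X : Matrix (Fin 2) (Fin 2) ℂ := !![0, 1; 1, 0]

/-- Pauli matrix `Z` -/
def Z : Matrix (Fin 2) (Fin 2) ℂ := !![1, 0; 0, -1]

/-- the AKLT tensors `A[1] = X`, `A[2] = X·Z`, `A[3] = Z` (indexed by `Fin 3`) -/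
def A : Fin 3 → Matrix (Fin 2) (Fin 2) ℂ := ![X, X * Z, Z]

/-- the PEPS map `P l (i,j) = (1/√2)·(A l) i j` -/
def P : Matrix (Fin 3) (Fin 2 × Fin 2) ℂ :=
  Matrix.of fun l p => (1 / (Real.sqrt 2 : ℂ)) * A l p.1 p.2

/-- Bell state `η₁ = (|00⟩+|11⟩)/√2` -/
def bell1 : Fin 2 × Fin 2 → ℂ := fun p =>
  if p = ((0 : Fin 2), (0 : Fin 2)) then ((1 / Real.sqrt 2 : ℝ) : ℂ)
  else if p = (1, 1) then ((1 / Real.sqrt 2 : ℝ) : ℂ) else 0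

/-- Bell state `η₂ = (|00⟩−|11⟩)/√2` -/
def bell2 : Fin 2 × Fin 2 → ℂ := fun p =>
  if p = ((0 : Fin 2), (0 : Fin 2)) then ((1 / Real.sqrt 2 : ℝ) : ℂ)
  else if p = (1, 1) then -((1 / Real.sqrt 2 : ℝ) : ℂ) else 0

/-- Bell state `η₃ = (|10⟩+|01⟩)/√2` -/
def bell3 : Fin 2 × Fin 2 → ℂ := fun p =>
  if p = ((1 : Fin 2), (0 : Fin 2)) then ((1 / Real.sqrt 2 : ℝ) : ℂ)
  else if p = (0, 1) then ((1 / Real.sqrt 2 : ℝ) : ℂ) else 0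

/-- Bell state `η₄ = (|10⟩−|01⟩)/√2` -/
def bell4 : Fin 2 × Fin 2 → ℂ := fun p =>
  if p = ((1 : Fin 2), (0 : Fin 2)) then ((1 / Real.sqrt 2 : ℝ) : ℂ)
  else if p = (0, 1) then -((1 / Real.sqrt 2 : ℝ) : ℂ) else 0

/-- outer product `|v⟩⟨w|` -/
def outer {n : Type*} (v w : n → ℂ) : Matrix n n ℂ :=
  Matrix.of fun i j => v i * conj (w j)

/-- the two-qubit phase gate `T_Z(ξ)` -/
def TZ (ξ : ℝ) : Matrix (Fin 2 × Fin 2) (Fin 2 × Fin 2) ℂ :=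
  Matrix.diagonal fun p =>
    if p = ((0 : Fin 2), (1 : Fin 2)) then Complex.exp (Complex.I * ξ) else 1

/-- the two-qubit gate `T_X(ξ)` -/
def TX (ξ : ℝ) : Matrix (Fin 2 × Fin 2) (Fin 2 × Fin 2) ℂ :=
  ((1 + Complex.exp (Complex.I * ξ)) / 2) • (outer bell2 bell2 + outer bell4 bell4)
    + ((1 - Complex.exp (Complex.I * ξ)) / 2) • (outer bell2 bell4 + outer bell4 bell2)
    + outer bell1 bell1 + outer bell3 bell3

/-- the qutrit gate `U(ξ)`: `U(ξ)|1⟩ = ((1+e^{iξ})/2)|1⟩ + ((1−e^{iξ})/2)|2⟩`,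
`U(ξ)|2⟩ = ((1−e^{iξ})/2)|1⟩ + ((1+e^{iξ})/2)|2⟩`, `U(ξ)|3⟩ = |3⟩` -/
def U (ξ : ℝ) : Matrix (Fin 3) (Fin 3) ℂ :=
  !![(1 + Complex.exp (Complex.I * ξ)) / 2, (1 - Complex.exp (Complex.I * ξ)) / 2, 0;
     (1 - Complex.exp (Complex.I * ξ)) / 2, (1 + Complex.exp (Complex.I * ξ)) / 2, 0;
     0, 0, 1]

/-- the qutrit permutation `V`: `V|1⟩=|3⟩`, `V|2⟩=|1⟩`, `V|3⟩=|2⟩` -/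
def V : Matrix (Fin 3) (Fin 3) ℂ := !![0, 1, 0; 0, 0, 1; 1, 0, 0]

/-!
`P` kills `η₁` and sends `η₂, η₃, η₄` to `|3⟩, |1⟩, |2⟩`; that is, `P = PBell * bellBasisᴴ`, where
the columns of the unitary `bellBasis` are the Bell vectors. In the Bell basis `T_X(ξ)` acts as
`U(ξ)` on `span {η₂, η₄}` and trivially elsewhere, while `Vᴴ U(ξ) V` acts as `U(ξ)` on
`span {|3⟩, |2⟩}`, the image of that plane under `P`. For `T_Z`, the column `|01⟩` of `P`,
proportional to `|1⟩ - |2⟩`, is an eigenvector of `U(ξ)` with eigenvalue `e^{iξ}`, and the other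
columns are fixed by `U(ξ)`.
-/

theorem outer_eq_mul_single_mul_conjTranspose {m n : Type*} [Fintype n] [DecidableEq n]
    (B : Matrix m n ℂ) (a b : n) :
    outer (fun i => B i a) (fun i => B i b) = B * single a b (1 : ℂ) * Bᴴ := by
  ext i j
  simp [outer, Matrix.mul_apply, single_apply, ite_and]

def bellBasis : Matrix (Fin 2 × Fin 2) (Fin 4) ℂ :=
  Matrix.of fun p k => ![bell1, bell2, bell3, bell4] k p

theorem bellBasis_conjTranspose_mul_self : bellBasisᴴ * bellBasis = 1 := by
  have h : (Real.sqrt 2 : ℂ)⁻¹ * (Real.sqrt 2 : ℂ)⁻¹ = 2⁻¹ := by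
    rw [← mul_inv, ← Complex.ofReal_mul, Real.mul_self_sqrt zero_le_two, Complex.ofReal_ofNat]
  ext k l
  fin_cases k <;> fin_cases l <;>
    simp [bellBasis, Matrix.mul_apply, Fintype.sum_prod_type, bell1, bell2, bell3, bell4, h] <;>
    norm_num

def TXBell (ξ : ℝ) : Matrix (Fin 4) (Fin 4) ℂ :=
  !![1, 0, 0, 0;
     0, (1 + Complex.exp (Complex.I * ξ)) / 2, 0, (1 - Complex.exp (Complex.I * ξ)) / 2;
     0, 0, 1, 0;
     0, (1 - Complex.exp (Complex.I * ξ)) / 2, 0, (1 + Complex.exp (Complex.I * ξ)) / 2]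

theorem TX_eq_bellBasis_mul_TXBell_mul_conjTranspose (ξ : ℝ) :
    TX ξ = bellBasis * TXBell ξ * bellBasisᴴ := by
  have h (a b : Fin 4) : bellBasis * single a b (1 : ℂ) * bellBasisᴴ
      = outer (![bell1, bell2, bell3, bell4] a) (![bell1, bell2, bell3, bell4] b) :=
    (outer_eq_mul_single_mul_conjTranspose bellBasis a b).symm
  have hTXBell : TXBell ξ
      = ((1 + Complex.exp (Complex.I * ξ)) / 2) • (single 1 1 1 + single 3 3 1)
      + ((1 - Complex.exp (Complex.I * ξ)) / 2) • (single 1 3 1 + single 3 1 1)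
      + single 0 0 1 + single 2 2 1 := by
    ext i j
    fin_cases i <;> fin_cases j <;> simp [TXBell]
  rw [TX, hTXBell]
  simp only [Matrix.mul_add, Matrix.add_mul, Matrix.mul_smul, Matrix.smul_mul, h]
  simp

def PBell : Matrix (Fin 3) (Fin 4) ℂ := !![0, 0, 1, 0; 0, 0, 0, 1; 0, 1, 0, 0]

theorem P_eq_PBell_mul : P = PBell * bellBasisᴴ := by
  ext l p
  obtain ⟨i, j⟩ := p
  fin_cases l <;> fin_cases i <;> fin_cases j <;>
    simp [P, PBell, A, X, Z, bellBasis, Matrix.mul_apply, Fin.sum_univ_succ,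
      bell1, bell2, bell3, bell4]

theorem PBell_mul_TXBell (ξ : ℝ) : PBell * TXBell ξ = Vᴴ * U ξ * V * PBell := by
  ext l k
  fin_cases l <;> fin_cases k <;>
    simp [PBell, TXBell, U, V, Matrix.mul_apply, Fin.sum_univ_succ]

theorem P_mul_TZ (ξ : ℝ) : P * TZ ξ = U ξ * P := by
  ext l p
  obtain ⟨i, j⟩ := p
  rw [TZ, mul_diagonal]
  fin_cases l <;> fin_cases i <;> fin_cases j <;>
    simp [P, U, A, X, Z, Matrix.mul_apply, Fin.sum_univ_succ] <;> ring

theorem P_mul_TX (ξ : ℝ) : P * TX ξ = (Vᴴ * U ξ * V) * P := by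
  rw [TX_eq_bellBasis_mul_TXBell_mul_conjTranspose, P_eq_PBell_mul]
  calc PBell * bellBasisᴴ * (bellBasis * TXBell ξ * bellBasisᴴ)
      = PBell * (bellBasisᴴ * bellBasis) * TXBell ξ * bellBasisᴴ := by
        simp only [Matrix.mul_assoc]
    _ = Vᴴ * U ξ * V * (PBell * bellBasisᴴ) := by
      rw [bellBasis_conjTranspose_mul_self, Matrix.mul_one, PBell_mul_TXBell, Matrix.mul_assoc]

/-- **intertwining of the PEPS map with the Dango operations.** For every
`ξ ∈ ℝ`, `P·T_Z(ξ) = U(ξ)·P` and `P·T_X(ξ) = (Vᴴ·U(ξ)·V)·P`. -/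
theorem statement15 (ξ : ℝ) :
    P * TZ ξ = U ξ * P ∧ P * TX ξ = (Vᴴ * U ξ * V) * P :=
  ⟨P_mul_TZ ξ, P_mul_TX ξ⟩

end
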